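/- Reduced-solution formula: Under the assumptions that Â is full column rank, [Ĉ D̂] full column rank, and ÂᵀÎÂ invertible, the minimizer over the variational subspace {N̂Ẑ + ÛD̂Ŷ} of (1/2)X̂ᵀX̂ − q̂ᵀX̂ subject to ÂᵀX̂ = b̂ is X̂*_min = Î(q̂ − ÂΛ*) with Λ* = (ÂᵀÎÂ)⁻¹(ÂᵀÎq̂ − b̂), which equals (Î − Â_pÂ_p⁺)q̂ + (Â_p⁺)ᵀb̂. -/

import Mathlib

/-!
Write `P = C C⁺` and `W = (1 - P) D`. Then `Î = W W⁺ + P` is the orthogonal projector onto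
`range C + range D` (the two summands are projectors with orthogonal ranges), and every vector of
the form `Î v` or `N Z + W Y` lies in that range. On `range Î ∩ {Aᵀ X = b}` the KKT point
`X* = Î (q - A Λ*)` is feasible by the choice of `Λ*`, and for feasible `X` the gradient `X* - q`
is orthogonal to `X - X*`, because `Î (X* - q) = -Î A Λ*` while `Î (X - X*) = X - X*` and
`Aᵀ (X - X*) = 0`; hence `f X = f X* + ½ ‖X - X*‖²`. The closed form comes from
`(Î A)ᵀ (Î A) = Aᵀ Î A`.
-/

open Matrix

namespace Matrix

variable {l m n k : Type*}

section FullColumnRank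

variable {K : Type*} [Field K] [Fintype n]

theorem rank_eq_card_iff_mulVec_injective (M : Matrix m n K) :
    M.rank = Fintype.card n ↔ Function.Injective M.mulVec := by
  rw [mulVec_injective_iff, linearIndependent_iff_card_eq_finrank_span,
    rank_eq_finrank_span_cols, eq_comm]
  rfl

theorem isUnit_transpose_mul_self_of_mulVec_injective [Fintype m] [LinearOrder K]
    [IsStrictOrderedRing K] [DecidableEq n] {M : Matrix m n K} (h : Function.Injective M.mulVec) :
    IsUnit (Mᵀ * M) := by
  rwa [← mulVec_injective_iff_isUnit, ← rank_eq_card_iff_mulVec_injective,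
    rank_transpose_mul_self, rank_eq_card_iff_mulVec_injective]

theorem mulVec_injective_iff_forall (M : Matrix m n K) :
    Function.Injective M.mulVec ↔ ∀ v, M *ᵥ v = 0 → v = 0 := by
  rw [← ker_mulVecLin_eq_bot_iff, LinearMap.ker_eq_bot]
  rfl

variable [Fintype l] {C : Matrix m l K} {D : Matrix m n K}

theorem mulVec_injective_of_fromCols_left (h : Function.Injective (fromCols C D).mulVec) :
    Function.Injective C.mulVec := fun x y hxy =>
  congrArg (· ∘ Sum.inl) (h (a₁ := Sum.elim x 0) (a₂ := Sum.elim y 0)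
    (by simp only [fromCols_mulVec_sumElim, hxy]))

/-- `(1 - C X) D y = 0` says `D y = C (X D y)`, a dependence among the columns of `fromCols C D`. -/
theorem mulVec_injective_of_fromCols_sub_mul [Fintype m] [DecidableEq m]
    (h : Function.Injective (fromCols C D).mulVec) (X : Matrix l m K) :
    Function.Injective ((1 - C * X) * D).mulVec := by
  rw [mulVec_injective_iff_forall] at h ⊢
  intro y hy
  have hDy : D *ᵥ y = C *ᵥ (X *ᵥ D *ᵥ y) := by
    rwa [← mulVec_mulVec, sub_mulVec, one_mulVec, sub_eq_zero, ← mulVec_mulVec] at hy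
  have hdep := h (Sum.elim (-(X *ᵥ D *ᵥ y)) y)
    (by rw [fromCols_mulVec_sumElim, mulVec_neg, ← hDy, neg_add_cancel])
  exact congrArg (· ∘ Sum.inr) hdep

end FullColumnRank

section LeftPinv

variable {R : Type*} [CommRing R] [Fintype m] [Fintype n] [DecidableEq n]

noncomputable def leftPinv (M : Matrix m n R) : Matrix n m R := (Mᵀ * M)⁻¹ * Mᵀ

variable {M : Matrix m n R}

theorem leftPinv_mul_self (hM : IsUnit (Mᵀ * M)) : leftPinv M * M = 1 := by
  rw [leftPinv, Matrix.mul_assoc, nonsing_inv_mul _ ((isUnit_iff_isUnit_det _).mp hM)]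

theorem mul_leftPinv_mul_self (hM : IsUnit (Mᵀ * M)) : M * leftPinv M * M = M := by
  rw [Matrix.mul_assoc, leftPinv_mul_self hM, Matrix.mul_one]

theorem transpose_leftPinv (M : Matrix m n R) : (leftPinv M)ᵀ = M * (Mᵀ * M)⁻¹ := by
  rw [leftPinv, transpose_mul, transpose_nonsing_inv, transpose_mul, transpose_transpose]

theorem mul_leftPinv_mul_transpose_leftPinv (hM : IsUnit (Mᵀ * M)) :
    M * leftPinv M * (leftPinv M)ᵀ = (leftPinv M)ᵀ := by
  rw [transpose_leftPinv, ← Matrix.mul_assoc, mul_leftPinv_mul_self hM]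

variable [StarRing R] [TrivialStar R]

theorem isStarProjection_mul_leftPinv (hM : IsUnit (Mᵀ * M)) :
    IsStarProjection (M * leftPinv M) where
  isIdempotentElem := by
    rw [IsIdempotentElem, ← Matrix.mul_assoc, mul_leftPinv_mul_self hM]
  isSelfAdjoint := by
    rw [IsSelfAdjoint, star_eq_conjTranspose, conjTranspose_eq_transpose_of_trivial,
      transpose_mul, transpose_leftPinv, leftPinv, Matrix.mul_assoc]

end LeftPinv

section StarProjection

variable {R : Type*} [CommRing R] [Fintype n] [DecidableEq n] [Fintype k] [DecidableEq k]
  {P : Matrix n n R} {D : Matrix n k R}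

/-- The paper's `Î` when `P = C C⁺`: the orthogonal projector onto `range P + range D`, obtained
by adding to `P` the projector onto the range of `(1 - P) D`. -/
noncomputable def supProj (P : Matrix n n R) (D : Matrix n k R) : Matrix n n R :=
  (1 - P) * D * leftPinv ((1 - P) * D) + P

theorem supProj_mul_one_sub_mul (hP : IsIdempotentElem P)
    (hW : IsUnit (((1 - P) * D)ᵀ * ((1 - P) * D))) :
    supProj P D * ((1 - P) * D) = (1 - P) * D := by
  rw [supProj, Matrix.add_mul, mul_leftPinv_mul_self hW, ← Matrix.mul_assoc,
    hP.mul_one_sub_self, Matrix.zero_mul, add_zero]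

variable [StarRing R] [TrivialStar R]

omit [DecidableEq n] [Fintype k] [DecidableEq k] in
theorem IsStarProjection.transpose_eq (hP : IsStarProjection P) : Pᵀ = P := by
  rw [← conjTranspose_eq_transpose_of_trivial, ← star_eq_conjTranspose, hP.isSelfAdjoint.star_eq]

omit [DecidableEq n] [Fintype k] [DecidableEq k] in
theorem IsStarProjection.transpose_mul_mul_self (hP : IsStarProjection P) (D : Matrix n k R) :
    (P * D)ᵀ * (P * D) = Dᵀ * P * D := by
  rw [transpose_mul, hP.transpose_eq, Matrix.mul_assoc, ← Matrix.mul_assoc P,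
    hP.isIdempotentElem.eq, Matrix.mul_assoc]

omit [DecidableEq n] in
theorem IsStarProjection.leftPinv_mul (hP : IsStarProjection P) (D : Matrix n k R) :
    leftPinv (P * D) = (Dᵀ * P * D)⁻¹ * Dᵀ * P := by
  rw [leftPinv, hP.transpose_mul_mul_self, transpose_mul, hP.transpose_eq]
  simp only [Matrix.mul_assoc]

theorem leftPinv_one_sub_mul_mul (hP : IsStarProjection P) :
    leftPinv ((1 - P) * D) * P = 0 := by
  rw [hP.one_sub.leftPinv_mul, Matrix.mul_assoc, hP.one_sub_mul_self, Matrix.mul_zero]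

theorem supProj_mul_self (hP : IsStarProjection P) : supProj P D * P = P := by
  rw [supProj, Matrix.add_mul, Matrix.mul_assoc, leftPinv_one_sub_mul_mul hP, Matrix.mul_zero,
    hP.isIdempotentElem.eq, zero_add]

theorem isStarProjection_supProj (hP : IsStarProjection P)
    (hW : IsUnit (((1 - P) * D)ᵀ * ((1 - P) * D))) : IsStarProjection (supProj P D) :=
  (isStarProjection_mul_leftPinv hW).add hP <| by
    rw [Matrix.mul_assoc, leftPinv_one_sub_mul_mul hP, Matrix.mul_zero]

end StarProjection

section ProjectedQuadraticProgram

variable [Fintype n] [Fintype m] [DecidableEq m]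

theorem half_dotProduct_self_sub_dotProduct_le {K : Type*} [Field K] [LinearOrder K]
    [IsStrictOrderedRing K] {x y q : n → K} (h : (y - x) ⬝ᵥ (x - q) = 0) :
    1 / 2 * (x ⬝ᵥ x) - q ⬝ᵥ x ≤ 1 / 2 * (y ⬝ᵥ y) - q ⬝ᵥ y := by
  obtain ⟨e, rfl⟩ : ∃ e, y = x + e := ⟨y - x, by abel⟩
  rw [add_sub_cancel_left] at h
  have he : 0 ≤ e ⬝ᵥ e := Finset.sum_nonneg fun i _ => mul_self_nonneg (e i)
  have hexpand : 1 / 2 * ((x + e) ⬝ᵥ (x + e)) - q ⬝ᵥ (x + e)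
      = 1 / 2 * (x ⬝ᵥ x) - q ⬝ᵥ x + e ⬝ᵥ (x - q) + 1 / 2 * (e ⬝ᵥ e) := by
    simp only [dotProduct_add, add_dotProduct, sub_dotProduct, dotProduct_comm e]
    ring
  linarith

variable (P : Matrix n n ℝ) (A : Matrix n m ℝ) (q : n → ℝ) (b : m → ℝ)

/-- The Lagrange multiplier `Λ*` of the constraint `Aᵀ X = b`. -/
noncomputable def projectedMultiplier : m → ℝ := (Aᵀ * P * A)⁻¹ *ᵥ ((Aᵀ * P) *ᵥ q - b)

noncomputable def projectedSolution : n → ℝ := P *ᵥ (q - A *ᵥ projectedMultiplier P A q b)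

theorem transpose_mulVec_projectedSolution (hS : IsUnit (Aᵀ * P * A)) :
    Aᵀ *ᵥ projectedSolution P A q b = b := by
  rw [projectedSolution, projectedMultiplier, mulVec_mulVec, mulVec_sub, mulVec_mulVec,
    mulVec_mulVec, mul_nonsing_inv _ ((isUnit_iff_isUnit_det _).mp hS), one_mulVec,
    sub_sub_cancel]

theorem projectedSolution_eq (hP : IsStarProjection P) :
    projectedSolution P A q b
      = (P - P * A * leftPinv (P * A)) *ᵥ q + (leftPinv (P * A))ᵀ *ᵥ b := by
  rw [projectedSolution, projectedMultiplier, transpose_leftPinv, hP.transpose_mul_mul_self,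
    hP.leftPinv_mul]
  simp only [mulVec_sub, sub_mulVec, mulVec_mulVec, Matrix.mul_assoc]
  abel

theorem projectedSolution_le (hP : IsStarProjection P) (hS : IsUnit (Aᵀ * P * A)) {X : n → ℝ}
    (hX : P *ᵥ X = X) (hAX : Aᵀ *ᵥ X = b) :
    1 / 2 * (projectedSolution P A q b ⬝ᵥ projectedSolution P A q b)
        - q ⬝ᵥ projectedSolution P A q b
      ≤ 1 / 2 * (X ⬝ᵥ X) - q ⬝ᵥ X := by
  apply half_dotProduct_self_sub_dotProduct_le
  set x := projectedSolution P A q b with hx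
  have hPx : P *ᵥ x = x := by rw [hx, projectedSolution, mulVec_mulVec, hP.isIdempotentElem.eq]
  have hPe : (X - x) ᵥ* P = X - x := by
    rw [← mulVec_transpose, hP.transpose_eq, mulVec_sub, hX, hPx]
  have hAe : (X - x) ᵥ* A = 0 := by
    rw [← mulVec_transpose, mulVec_sub, hAX, transpose_mulVec_projectedSolution P A q b hS,
      sub_self]
  -- `x - q` is orthogonal to the feasible directions: `P (x - q) = - P A Λ*`.
  have hres : P *ᵥ (x - q) = -((P * A) *ᵥ projectedMultiplier P A q b) := by
    rw [mulVec_sub, hPx, hx, projectedSolution, mulVec_sub, mulVec_mulVec]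
    abel
  rw [← hPe, ← dotProduct_mulVec, hres, dotProduct_neg, dotProduct_mulVec, ← vecMul_vecMul, hPe,
    hAe, zero_dotProduct, neg_zero]

end ProjectedQuadraticProgram

end Matrix

theorem reduced_solution_formula_general
    (n d k m : ℕ) (C : Matrix (Fin n) (Fin d) ℝ) (D : Matrix (Fin n) (Fin k) ℝ)
    (A : Matrix (Fin n) (Fin m) ℝ)
    (q : Fin n → ℝ) (b : Fin m → ℝ)
    (hrank : (Matrix.fromCols C D).rank = d + k) :
    let Cp : Matrix (Fin d) (Fin n) ℝ := (Cᵀ * C)⁻¹ * Cᵀ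
    let U : Matrix (Fin n) (Fin n) ℝ := 1 - C * Cp
    let N : Matrix (Fin n) (Fin d) ℝ := Cpᵀ
    let UDp : Matrix (Fin k) (Fin n) ℝ := (Dᵀ * U * D)⁻¹ * Dᵀ * Uᵀ
    let Ihat : Matrix (Fin n) (Fin n) ℝ := U * D * UDp + C * Cp
    let App : Matrix (Fin n) (Fin m) ℝ := Ihat * A
    let Appp : Matrix (Fin m) (Fin n) ℝ := (Appᵀ * App)⁻¹ * Appᵀ
    let Λs : Fin m → ℝ := (Aᵀ * Ihat * A)⁻¹ *ᵥ ((Aᵀ * Ihat) *ᵥ q - b)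
    let Xs : Fin n → ℝ := Ihat *ᵥ (q - A *ᵥ Λs)
    let f : (Fin n → ℝ) → ℝ := fun X => (1 / 2) * (X ⬝ᵥ X) - q ⬝ᵥ X
    IsUnit (Aᵀ * Ihat * A) →
      Xs = (Ihat - App * Appp) *ᵥ q + Apppᵀ *ᵥ b ∧
      (∃ (Z : Fin d → ℝ) (Y : Fin k → ℝ), Xs = N *ᵥ Z + (U * D) *ᵥ Y) ∧
      Aᵀ *ᵥ Xs = b ∧
      ∀ (Z : Fin d → ℝ) (Y : Fin k → ℝ),
        Aᵀ *ᵥ (N *ᵥ Z + (U * D) *ᵥ Y) = b →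
          f Xs ≤ f (N *ᵥ Z + (U * D) *ᵥ Y) := by
  intro Cp U N UDp Ihat App Appp Λs Xs f hS
  have hFC : Function.Injective (fromCols C D).mulVec := by
    rw [← rank_eq_card_iff_mulVec_injective, hrank, Fintype.card_sum, Fintype.card_fin,
      Fintype.card_fin]
  have hC := isUnit_transpose_mul_self_of_mulVec_injective (mulVec_injective_of_fromCols_left hFC)
  have hW := isUnit_transpose_mul_self_of_mulVec_injective
    (mulVec_injective_of_fromCols_sub_mul hFC Cp)
  have hP : IsStarProjection (C * Cp) := isStarProjection_mul_leftPinv hC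
  have hU : IsStarProjection U := hP.one_sub
  have hUDp : UDp = leftPinv (U * D) := by
    rw [hU.leftPinv_mul]
    show (Dᵀ * U * D)⁻¹ * Dᵀ * Uᵀ = _
    rw [hU.transpose_eq]
  have hIhat : Ihat = supProj (C * Cp) D := by
    show U * D * UDp + C * Cp = U * D * leftPinv (U * D) + C * Cp
    rw [hUDp]
  have hI : IsStarProjection Ihat := hIhat ▸ isStarProjection_supProj hP hW
  have hPN : C * Cp * N = N := mul_leftPinv_mul_transpose_leftPinv hC
  have hIN : Ihat * N = N := by
    rw [← hPN, ← Matrix.mul_assoc, hIhat, supProj_mul_self hP]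
  have hIUD : Ihat * (U * D) = U * D := hIhat ▸ supProj_mul_one_sub_mul hP.isIdempotentElem hW
  have hsplit (v : Fin n → ℝ) : Ihat *ᵥ v = N *ᵥ (Cᵀ *ᵥ v) + (U * D) *ᵥ (UDp *ᵥ v) := by
    have hNC : N * Cᵀ = C * Cp := by rw [← hP.transpose_eq, transpose_mul]
    rw [mulVec_mulVec, mulVec_mulVec, hNC, ← add_mulVec, add_comm]
  refine ⟨projectedSolution_eq Ihat A q b hI, ⟨_, _, hsplit _⟩,
    transpose_mulVec_projectedSolution Ihat A q b hS, fun Z Y hfeas => ?_⟩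
  refine projectedSolution_le Ihat A q b hI hS ?_ hfeas
  rw [mulVec_add, mulVec_mulVec, mulVec_mulVec, hIN, hIUD]

/-- Reduced-solution formula. The minimizer of the quadratic
program over the variational subspace `{N̂Ẑ + ÛD̂Ŷ}` subject to `ÂᵀX̂ = b̂`
is `X̂*_min = Î(q̂ − ÂΛ*)` with `Λ* = (ÂᵀÎÂ)⁻¹(ÂᵀÎq̂ − b̂)`, which equals
`(Î − Â_pÂ_p⁺)q̂ + (Â_p⁺)ᵀb̂`. -/
theorem reduced_solution_formula
    (n d k m : ℕ) (C : Matrix (Fin n) (Fin d) ℝ) (D : Matrix (Fin n) (Fin k) ℝ)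
    (A : Matrix (Fin n) (Fin m) ℝ)
    (q : Fin n → ℝ) (b : Fin m → ℝ)
    (hrank : (Matrix.fromCols C D).rank = d + k)
    (hArank : A.rank = m) :
    let Cp : Matrix (Fin d) (Fin n) ℝ := (Cᵀ * C)⁻¹ * Cᵀ
    let U : Matrix (Fin n) (Fin n) ℝ := 1 - C * Cp
    let N : Matrix (Fin n) (Fin d) ℝ := Cpᵀ
    let UDp : Matrix (Fin k) (Fin n) ℝ := (Dᵀ * U * D)⁻¹ * Dᵀ * Uᵀ
    let Ihat : Matrix (Fin n) (Fin n) ℝ := U * D * UDp + C * Cp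
    let App : Matrix (Fin n) (Fin m) ℝ := Ihat * A
    let Appp : Matrix (Fin m) (Fin n) ℝ := (Appᵀ * App)⁻¹ * Appᵀ
    let Λs : Fin m → ℝ := (Aᵀ * Ihat * A)⁻¹ *ᵥ ((Aᵀ * Ihat) *ᵥ q - b)
    let Xs : Fin n → ℝ := Ihat *ᵥ (q - A *ᵥ Λs)
    let f : (Fin n → ℝ) → ℝ := fun X => (1 / 2) * (X ⬝ᵥ X) - q ⬝ᵥ X
    IsUnit (Aᵀ * Ihat * A) →
      Xs = (Ihat - App * Appp) *ᵥ q + Apppᵀ *ᵥ b ∧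
      (∃ (Z : Fin d → ℝ) (Y : Fin k → ℝ), Xs = N *ᵥ Z + (U * D) *ᵥ Y) ∧
      Aᵀ *ᵥ Xs = b ∧
      ∀ (Z : Fin d → ℝ) (Y : Fin k → ℝ),
        Aᵀ *ᵥ (N *ᵥ Z + (U * D) *ᵥ Y) = b →
          f Xs ≤ f (N *ᵥ Z + (U * D) *ᵥ Y) :=
  reduced_solution_formula_general n d k m C D A q b hrank
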